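/- Let a,b be smooth real-valued functions on ℝ² compactly supported in the open upper half-plane and divergence-free in the hyperbolic sense, i.e. ∂ₓa + ∂_y b − 2b/y = 0 on {y>0}. Then, with M11 = ∂ₓa − b/y, M12 = ∂_y a − a/y, M21 = ∂ₓb + a/y, M22 = ∂_y b − b/y, the Hodge dissipation form satisfies the exact identity ∫∫_{y>0} (M21 − M12)²·y⁻² dx dy = ∫∫_{y>0} [M11² + M12² + M21² + M22²]·y⁻² dx dy − ∫∫_{y>0} (a² + b²)·y⁻⁴ dx dy. (In invariant form: ‖du♭‖²_{L²(ℍ²)} = ‖∇u‖²_{L²(ℍ²)} − ‖u‖²_{L²(ℍ²)}, i.e. the Hodge Laplacian dissipation fails to control the full H¹ norm on ℍ² because the Ricci term fights dissipation.) -/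

import Mathlib

open MeasureTheory Filter Topology

/-- Partial derivative in the `x` direction of a function on `ℝ × ℝ`. -/
noncomputable def pdX (f : ℝ × ℝ → ℝ) (p : ℝ × ℝ) : ℝ := fderiv ℝ f p (1, 0)

/-- Partial derivative in the `y` direction of a function on `ℝ × ℝ`. -/
noncomputable def pdY (f : ℝ × ℝ → ℝ) (p : ℝ × ℝ) : ℝ := fderiv ℝ f p (0, 1)

/-- The open upper half-plane, the model of the hyperbolic plane `ℍ²`. -/
def upperHalf : Set (ℝ × ℝ) := {p : ℝ × ℝ | 0 < p.2}

lemma pd_smooth {f : ℝ × ℝ → ℝ} (hf : ContDiff ℝ (⊤ : ℕ∞) f) (v : ℝ × ℝ) :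
    ContDiff ℝ (⊤ : ℕ∞) (fun p => fderiv ℝ f p v) :=
  (hf.fderiv_right (by simp)).clm_apply contDiff_const

lemma pd_hcs {f : ℝ × ℝ → ℝ} (hc : HasCompactSupport f) (v : ℝ × ℝ) :
    HasCompactSupport (fun p => fderiv ℝ f p v) := by
  apply HasCompactSupport.intro hc
  intro x hx
  have : fderiv ℝ f x = 0 := by
    by_contra h
    exact hx (support_fderiv_subset ℝ (f := f) (Function.mem_support.2 h))
  simp [this]

lemma integral_pd_zero {h : ℝ × ℝ → ℝ} (hh : ContDiff ℝ (⊤ : ℕ∞) h) (hc : HasCompactSupport h)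
    (v : ℝ × ℝ) : ∫ p : ℝ × ℝ, fderiv ℝ h p v = 0 := by
  have hint : Integrable (fun p : ℝ × ℝ => fderiv ℝ h p v) :=
    ((pd_smooth hh v).continuous).integrable_of_hasCompactSupport (pd_hcs hc v)
  have hint2 : Integrable (fun p : ℝ × ℝ => h p) :=
    hh.continuous.integrable_of_hasCompactSupport hc
  have key := integral_mul_fderiv_eq_neg_fderiv_mul_of_integrable
      (f := fun _ : ℝ × ℝ => (1:ℝ)) (g := h) (v := v) (μ := volume)
      (by simpa [fderiv_fun_const] using (integrable_zero (ℝ × ℝ) ℝ volume))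
      (by simpa using hint) (by simpa using hint2)
      (fun x _ => differentiableAt_const _) (fun x _ => hh.differentiable (by simp) x)
  simpa [fderiv_fun_const] using key

lemma term_smooth {g h : ℝ × ℝ → ℝ} {ε : ℝ} (hε : 0 < ε)
    (hg : ContDiff ℝ (⊤ : ℕ∞) g) (hh : ContDiff ℝ (⊤ : ℕ∞) h)
    (hvan : ∀ p : ℝ × ℝ, p.2 < ε → h =ᶠ[𝓝 p] 0) (n : ℕ) :
    ContDiff ℝ (⊤ : ℕ∞) (fun q : ℝ × ℝ => g q * h q / q.2 ^ n) := by
  rw [contDiff_iff_contDiffAt]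
  intro p
  rcases lt_or_ge p.2 ε with hp | hp
  · apply ContDiffAt.congr_of_eventuallyEq (contDiffAt_const (c := (0:ℝ)))
    filter_upwards [hvan p hp] with q hq
    simp only [Pi.zero_apply] at hq
    simp [hq]
  · have hy : p.2 ≠ 0 := (lt_of_lt_of_le hε hp).ne'
    exact (hg.contDiffAt.mul hh.contDiffAt).div ((contDiff_snd.pow n).contDiffAt)
      (pow_ne_zero _ hy)

lemma line_hasDerivAt (p v : ℝ × ℝ) :
    HasDerivAt (fun t : ℝ => p + t • v) v 0 := by
  simpa using ((hasDerivAt_id (0:ℝ)).smul_const v).const_add p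

lemma term_fderiv {g h : ℝ × ℝ → ℝ} (hg : ContDiff ℝ (⊤ : ℕ∞) g) (hh : ContDiff ℝ (⊤ : ℕ∞) h)
    {p : ℝ × ℝ} (hy : p.2 ≠ 0) (n : ℕ) (v : ℝ × ℝ) :
    fderiv ℝ (fun q : ℝ × ℝ => g q * h q / q.2 ^ (n+1)) p v
      = (fderiv ℝ g p v * h p + g p * fderiv ℝ h p v) / p.2 ^ (n+1)
        - (n+1) * (g p * h p) * v.2 / p.2 ^ (n+2) := by
  set F : ℝ × ℝ → ℝ := fun q => g q * h q / q.2 ^ (n+1) with hF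
  have hFd : DifferentiableAt ℝ F p :=
    (((hg.contDiffAt.mul hh.contDiffAt).div ((contDiff_snd.pow (n+1)).contDiffAt)
      (pow_ne_zero _ hy)).differentiableAt (by simp))
  set ℓ : ℝ → ℝ × ℝ := fun t => p + t • v with hℓdef
  have hℓ : HasDerivAt ℓ v 0 := line_hasDerivAt p v
  have hℓ0 : ℓ 0 = p := by simp [hℓdef]
  have hF0 : HasFDerivAt F (fderiv ℝ F p) (ℓ 0) := hℓ0.symm ▸ hFd.hasFDerivAt
  have hA : HasDerivAt (fun t => F (ℓ t)) (fderiv ℝ F p v) 0 := hF0.comp_hasDerivAt 0 hℓ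
  have hg0 : HasFDerivAt g (fderiv ℝ g p) (ℓ 0) :=
    hℓ0.symm ▸ ((hg.differentiable (by simp)) p).hasFDerivAt
  have hgl : HasDerivAt (fun t => g (ℓ t)) (fderiv ℝ g p v) 0 := hg0.comp_hasDerivAt 0 hℓ
  have hh0 : HasFDerivAt h (fderiv ℝ h p) (ℓ 0) :=
    hℓ0.symm ▸ ((hh.differentiable (by simp)) p).hasFDerivAt
  have hhl : HasDerivAt (fun t => h (ℓ t)) (fderiv ℝ h p v) 0 := hh0.comp_hasDerivAt 0 hℓ
  have hyl : HasDerivAt (fun t => (ℓ t).2) v.2 0 := by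
    have : HasDerivAt (fun t : ℝ => p.2 + t * v.2) v.2 0 := by
      simpa using ((hasDerivAt_id (0:ℝ)).mul_const v.2).const_add p.2
    exact this
  have hpow : HasDerivAt (fun t => (ℓ t).2 ^ (n+1))
      (((n+1 : ℕ) : ℝ) * (ℓ 0).2 ^ n * v.2) 0 := by
    simpa using hyl.fun_pow (n+1)
  have hB : HasDerivAt (fun t => F (ℓ t))
      (((fderiv ℝ g p v * h (ℓ 0) + g (ℓ 0) * fderiv ℝ h p v) * (ℓ 0).2 ^ (n+1)
        - g (ℓ 0) * h (ℓ 0) * (((n+1 : ℕ) : ℝ) * (ℓ 0).2 ^ n * v.2)) / ((ℓ 0).2 ^ (n+1)) ^ 2)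
      0 := by
    have := ((hgl.fun_mul hhl).fun_div hpow (by rw [hℓ0]; exact pow_ne_zero _ hy))
    simpa using this
  have heq := hA.unique hB
  rw [heq, hℓ0]
  have h2 : p.2 ^ (n+1) ≠ 0 := pow_ne_zero _ hy
  push_cast
  field_simp
  ring

lemma schwarz {f : ℝ × ℝ → ℝ} (hf : ContDiff ℝ (⊤ : ℕ∞) f) (p v w : ℝ × ℝ) :
    fderiv ℝ (fun q => fderiv ℝ f q w) p v = fderiv ℝ (fun q => fderiv ℝ f q v) p w := by
  have hdf : DifferentiableAt ℝ (fderiv ℝ f) p :=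
    ((hf.fderiv_right (m := (⊤ : ℕ∞)) (by simp)).differentiable (by simp)) p
  rw [fderiv_clm_apply hdf (differentiableAt_const w),
    fderiv_clm_apply hdf (differentiableAt_const v)]
  have hsym := ((hf.contDiffAt (x := p)).isSymmSndFDerivAt (by rw [minSmoothness_of_isRCLikeNormedField]; exact WithTop.coe_le_coe.2 le_top)) v w
  simp [hsym]

lemma term_fderiv2 {g h : ℝ × ℝ → ℝ} (hg : ContDiff ℝ (⊤ : ℕ∞) g) (hh : ContDiff ℝ (⊤ : ℕ∞) h)
    {p : ℝ × ℝ} (hy : p.2 ≠ 0) (v : ℝ × ℝ) :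
    fderiv ℝ (fun q : ℝ × ℝ => g q * h q / q.2 ^ 2) p v
      = (fderiv ℝ g p v * h p + g p * fderiv ℝ h p v) / p.2 ^ 2
        - 2 * (g p * h p) * v.2 / p.2 ^ 3 := by
  have := term_fderiv hg hh hy 1 v
  norm_num at this
  exact this

lemma term_fderiv3 {g h : ℝ × ℝ → ℝ} (hg : ContDiff ℝ (⊤ : ℕ∞) g) (hh : ContDiff ℝ (⊤ : ℕ∞) h)
    {p : ℝ × ℝ} (hy : p.2 ≠ 0) (v : ℝ × ℝ) :
    fderiv ℝ (fun q : ℝ × ℝ => g q * h q / q.2 ^ 3) p v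
      = (fderiv ℝ g p v * h p + g p * fderiv ℝ h p v) / p.2 ^ 3
        - 3 * (g p * h p) * v.2 / p.2 ^ 4 := by
  have := term_fderiv hg hh hy 2 v
  norm_num at this
  exact this

set_option maxHeartbeats 2000000 in
/-- For a divergence-free compactly supported field `u = (a,b)` on `ℍ²`, the Hodge
dissipation form satisfies `‖du♭‖² = ‖∇u‖² − ‖u‖²`: the Ricci term fights dissipation,
so the Hodge Laplacian fails to control the full `H¹` norm on `ℍ²`. -/
theorem hodge_dissipation_defect_on_H2
    (a b : ℝ × ℝ → ℝ)
    (ha : ContDiff ℝ (⊤ : ℕ∞) a) (hb : ContDiff ℝ (⊤ : ℕ∞) b)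
    (hca : HasCompactSupport a) (hcb : HasCompactSupport b)
    (hsa : tsupport a ⊆ upperHalf) (hsb : tsupport b ⊆ upperHalf)
    (hdiv : ∀ p ∈ upperHalf, pdX a p + pdY b p - 2 * b p / p.2 = 0) :
    ∫ p in upperHalf,
        ((pdX b p + a p / p.2) - (pdY a p - a p / p.2)) ^ 2 / p.2 ^ 2
      = (∫ p in upperHalf,
          ((pdX a p - b p / p.2) ^ 2 + (pdY a p - a p / p.2) ^ 2
            + (pdX b p + a p / p.2) ^ 2 + (pdY b p - b p / p.2) ^ 2) / p.2 ^ 2)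
        - ∫ p in upperHalf, (a p ^ 2 + b p ^ 2) / p.2 ^ 4 := by
  classical
  set K : Set (ℝ × ℝ) := tsupport a ∪ tsupport b with hKdef
  have hK : IsCompact K := hca.union hcb
  have hKu : K ⊆ upperHalf := Set.union_subset hsa hsb
  obtain ⟨ε, hε, hεK⟩ : ∃ ε : ℝ, 0 < ε ∧ ∀ p ∈ K, ε ≤ p.2 := by
    rcases K.eq_empty_or_nonempty with hne | hne
    · exact ⟨1, one_pos, by simp [hne]⟩
    · obtain ⟨p₀, hp₀K, hmin⟩ := hK.exists_isMinOn hne continuous_snd.continuousOn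
      exact ⟨p₀.2, hKu hp₀K, fun p hp => hmin hp⟩
  have hU : IsOpen {p : ℝ × ℝ | p.2 < ε} := isOpen_lt continuous_snd continuous_const
  have haz : ∀ p : ℝ × ℝ, p.2 < ε → a =ᶠ[nhds p] 0 := by
    intro p hp
    filter_upwards [hU.mem_nhds hp] with q hq
    simp only [Pi.zero_apply]
    by_contra hqa
    exact absurd (hεK q (Set.mem_union_left _ (subset_tsupport a hqa))) (not_le.2 hq)
  have hbz : ∀ p : ℝ × ℝ, p.2 < ε → b =ᶠ[nhds p] 0 := by
    intro p hp
    filter_upwards [hU.mem_nhds hp] with q hq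
    simp only [Pi.zero_apply]
    by_contra hqa
    exact absurd (hεK q (Set.mem_union_right _ (subset_tsupport b hqa))) (not_le.2 hq)
  have haz' : ∀ p : ℝ × ℝ, p.2 < ε → a p = 0 := fun p hp => (haz p hp).eq_of_nhds
  have hbz' : ∀ p : ℝ × ℝ, p.2 < ε → b p = 0 := fun p hp => (hbz p hp).eq_of_nhds
  have hfa : ∀ p : ℝ × ℝ, p.2 < ε → fderiv ℝ a p = 0 := by
    intro p hp
    rw [(haz p hp).fderiv_eq]
    exact fderiv_const_apply 0
  have hfb : ∀ p : ℝ × ℝ, p.2 < ε → fderiv ℝ b p = 0 := by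
    intro p hp
    rw [(hbz p hp).fderiv_eq]
    exact fderiv_const_apply 0
  -- off-K vanishing
  have hKz : ∀ x : ℝ × ℝ, x ∉ K →
      a x = 0 ∧ b x = 0 ∧ fderiv ℝ a x = 0 ∧ fderiv ℝ b x = 0 := by
    intro x hx
    have hxa : x ∉ tsupport a := fun h => hx (Set.mem_union_left _ h)
    have hxb : x ∉ tsupport b := fun h => hx (Set.mem_union_right _ h)
    refine ⟨image_eq_zero_of_notMem_tsupport hxa, image_eq_zero_of_notMem_tsupport hxb, ?_, ?_⟩
    · by_contra h
      exact hxa (support_fderiv_subset ℝ (f := a) (Function.mem_support.2 h))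
    · by_contra h
      exact hxb (support_fderiv_subset ℝ (f := b) (Function.mem_support.2 h))
  -- the potentials
  set F : ℝ × ℝ → ℝ :=
    fun q => pdY a q * b q / q.2 ^ 2 - a q * b q / q.2 ^ 3 with hFdef
  set G : ℝ × ℝ → ℝ :=
    fun q => ((a q / 2) * a q / q.2 ^ 3 + (b q / 2) * b q / q.2 ^ 3)
      - pdX a q * b q / q.2 ^ 2 with hGdef
  have hFs : ContDiff ℝ (⊤ : ℕ∞) F :=
    (term_smooth hε (pd_smooth ha (0, 1)) hb hbz 2).sub (term_smooth hε ha hb hbz 3)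
  have hGs : ContDiff ℝ (⊤ : ℕ∞) G :=
    ((term_smooth hε (ha.div_const 2) ha haz 3).add
      (term_smooth hε (hb.div_const 2) hb hbz 3)).sub
      (term_smooth hε (pd_smooth ha (1, 0)) hb hbz 2)
  have hFc : HasCompactSupport F := by
    apply HasCompactSupport.intro hK
    intro x hx
    obtain ⟨hax, hbx, _, _⟩ := hKz x hx
    simp [hFdef, hax, hbx]
  have hGc : HasCompactSupport G := by
    apply HasCompactSupport.intro hK
    intro x hx
    obtain ⟨hax, hbx, _, _⟩ := hKz x hx
    simp [hGdef, hax, hbx]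
  have hIF : ∫ p : ℝ × ℝ, fderiv ℝ F p (1, 0) = 0 := integral_pd_zero hFs hFc (1, 0)
  have hIG : ∫ p : ℝ × ℝ, fderiv ℝ G p (0, 1) = 0 := integral_pd_zero hGs hGc (0, 1)
  have hFint : Integrable (fun p : ℝ × ℝ => fderiv ℝ F p (1, 0)) :=
    ((pd_smooth hFs (1, 0)).continuous).integrable_of_hasCompactSupport (pd_hcs hFc (1, 0))
  have hGint : Integrable (fun p : ℝ × ℝ => fderiv ℝ G p (0, 1)) :=
    ((pd_smooth hGs (0, 1)).continuous).integrable_of_hasCompactSupport (pd_hcs hGc (0, 1))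
  -- the integrands
  set I1 : ℝ × ℝ → ℝ :=
    fun p => ((pdX b p + a p / p.2) - (pdY a p - a p / p.2)) ^ 2 / p.2 ^ 2 with hI1def
  set I2 : ℝ × ℝ → ℝ :=
    fun p => ((pdX a p - b p / p.2) ^ 2 + (pdY a p - a p / p.2) ^ 2
      + (pdX b p + a p / p.2) ^ 2 + (pdY b p - b p / p.2) ^ 2) / p.2 ^ 2 with hI2def
  set I3 : ℝ × ℝ → ℝ := fun p => (a p ^ 2 + b p ^ 2) / p.2 ^ 4 with hI3def
  -- low vanishing of integrands
  have hI1z : ∀ p : ℝ × ℝ, p.2 < ε → I1 p = 0 := by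
    intro p hp
    simp [hI1def, pdX, pdY, haz' p hp, hbz' p hp, hfa p hp, hfb p hp]
  have hI2z : ∀ p : ℝ × ℝ, p.2 < ε → I2 p = 0 := by
    intro p hp
    simp [hI2def, pdX, pdY, haz' p hp, hbz' p hp, hfa p hp, hfb p hp]
  have hI3z : ∀ p : ℝ × ℝ, p.2 < ε → I3 p = 0 := by
    intro p hp
    simp [hI3def, haz' p hp, hbz' p hp]
  -- continuity of integrands
  have hsnd : ∀ p : ℝ × ℝ, ContinuousAt (fun q : ℝ × ℝ => q.2) p :=
    fun p => continuous_snd.continuousAt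
  have hI1c : Continuous I1 := by
    rw [continuous_iff_continuousAt]
    intro p
    rcases lt_or_ge p.2 ε with hp | hp
    · have hev : I1 =ᶠ[nhds p] (fun _ => 0) := by
        filter_upwards [hU.mem_nhds hp] with q hq
        exact hI1z q hq
      exact ContinuousAt.congr (continuousAt_const) hev.symm
    · have hy : p.2 ≠ 0 := (hε.trans_le hp).ne'
      exact ContinuousAt.div
        ((((pd_smooth hb (1, 0)).continuous.continuousAt.add
          (ha.continuous.continuousAt.div (hsnd p) hy)).sub
          ((pd_smooth ha (0, 1)).continuous.continuousAt.sub
          (ha.continuous.continuousAt.div (hsnd p) hy))).pow 2)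
        ((hsnd p).pow 2) (pow_ne_zero _ hy)
  have hI2c : Continuous I2 := by
    rw [continuous_iff_continuousAt]
    intro p
    rcases lt_or_ge p.2 ε with hp | hp
    · have hev : I2 =ᶠ[nhds p] (fun _ => 0) := by
        filter_upwards [hU.mem_nhds hp] with q hq
        exact hI2z q hq
      exact ContinuousAt.congr (continuousAt_const) hev.symm
    · have hy : p.2 ≠ 0 := (hε.trans_le hp).ne'
      refine ContinuousAt.div (ContinuousAt.congr
        ((((pd_smooth ha (1, 0)).continuous.continuousAt.sub
            (hb.continuous.continuousAt.div (hsnd p) hy)).pow 2).add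
          ((((pd_smooth ha (0, 1)).continuous.continuousAt.sub
            (ha.continuous.continuousAt.div (hsnd p) hy)).pow 2).add
          ((((pd_smooth hb (1, 0)).continuous.continuousAt.add
            (ha.continuous.continuousAt.div (hsnd p) hy)).pow 2).add
          (((pd_smooth hb (0, 1)).continuous.continuousAt.sub
            (hb.continuous.continuousAt.div (hsnd p) hy)).pow 2)))) ?_)
        ((hsnd p).pow 2) (pow_ne_zero _ hy)
      filter_upwards with q
      simp only [pdX, pdY, Pi.div_apply, Pi.add_apply, Pi.sub_apply, Pi.pow_apply, Pi.mul_apply]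
      ring
  have hI3c : Continuous I3 := by
    rw [continuous_iff_continuousAt]
    intro p
    rcases lt_or_ge p.2 ε with hp | hp
    · have hev : I3 =ᶠ[nhds p] (fun _ => 0) := by
        filter_upwards [hU.mem_nhds hp] with q hq
        exact hI3z q hq
      exact ContinuousAt.congr (continuousAt_const) hev.symm
    · have hy : p.2 ≠ 0 := (hε.trans_le hp).ne'
      exact ContinuousAt.div
        ((ha.continuous.continuousAt.pow 2).add (hb.continuous.continuousAt.pow 2))
        ((hsnd p).pow 4) (pow_ne_zero _ hy)
  -- compact support of integrands
  have hcs1 : HasCompactSupport I1 := by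
    apply HasCompactSupport.intro hK
    intro x hx
    obtain ⟨hax, hbx, hfax, hfbx⟩ := hKz x hx
    simp [hI1def, pdX, pdY, hax, hbx, hfax, hfbx]
  have hcs2 : HasCompactSupport I2 := by
    apply HasCompactSupport.intro hK
    intro x hx
    obtain ⟨hax, hbx, hfax, hfbx⟩ := hKz x hx
    simp [hI2def, pdX, pdY, hax, hbx, hfax, hfbx]
  have hcs3 : HasCompactSupport I3 := by
    apply HasCompactSupport.intro hK
    intro x hx
    obtain ⟨hax, hbx, hfax, hfbx⟩ := hKz x hx
    simp [hI3def, hax, hbx]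
  have hint1 : Integrable I1 := hI1c.integrable_of_hasCompactSupport hcs1
  have hint2 : Integrable I2 := hI2c.integrable_of_hasCompactSupport hcs2
  have hint3 : Integrable I3 := hI3c.integrable_of_hasCompactSupport hcs3
  -- pointwise identity
  have hpt : ∀ p : ℝ × ℝ, I2 p - I3 p - I1 p
      = 2 * (fderiv ℝ F p (1, 0) + fderiv ℝ G p (0, 1)) := by
    intro p
    rcases lt_or_ge p.2 ε with hp | hp
    · have hF0 : fderiv ℝ F p = 0 := by
        have hev : F =ᶠ[nhds p] 0 := by
          filter_upwards [hU.mem_nhds hp] with q hq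
          simp [hFdef, hbz' q hq]
        rw [hev.fderiv_eq]
        exact fderiv_const_apply 0
      have hG0 : fderiv ℝ G p = 0 := by
        have hev : G =ᶠ[nhds p] 0 := by
          filter_upwards [hU.mem_nhds hp] with q hq
          simp [hGdef, haz' q hq, hbz' q hq]
        rw [hev.fderiv_eq]
        exact fderiv_const_apply 0
      rw [hI1z p hp, hI2z p hp, hI3z p hp, hF0, hG0]
      simp
    · have hy : p.2 ≠ 0 := (hε.trans_le hp).ne'
      have dT1 : DifferentiableAt ℝ (fun q : ℝ × ℝ => pdY a q * b q / q.2 ^ 2) p :=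
        (term_smooth hε (pd_smooth ha (0, 1)) hb hbz 2).differentiable (by simp) p
      have dT2 : DifferentiableAt ℝ (fun q : ℝ × ℝ => a q * b q / q.2 ^ 3) p :=
        (term_smooth hε ha hb hbz 3).differentiable (by simp) p
      have dT3 : DifferentiableAt ℝ (fun q : ℝ × ℝ => (a q / 2) * a q / q.2 ^ 3) p :=
        (term_smooth hε (ha.div_const 2) ha haz 3).differentiable (by simp) p
      have dT4 : DifferentiableAt ℝ (fun q : ℝ × ℝ => (b q / 2) * b q / q.2 ^ 3) p :=
        (term_smooth hε (hb.div_const 2) hb hbz 3).differentiable (by simp) p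
      have dT5 : DifferentiableAt ℝ (fun q : ℝ × ℝ => pdX a q * b q / q.2 ^ 2) p :=
        (term_smooth hε (pd_smooth ha (1, 0)) hb hbz 2).differentiable (by simp) p
      have eF : fderiv ℝ F p (1, 0)
          = fderiv ℝ (fun q : ℝ × ℝ => pdY a q * b q / q.2 ^ 2) p (1, 0)
            - fderiv ℝ (fun q : ℝ × ℝ => a q * b q / q.2 ^ 3) p (1, 0) := by
        rw [hFdef, fderiv_fun_sub dT1 dT2]
        rfl
      have eG : fderiv ℝ G p (0, 1)
          = fderiv ℝ (fun q : ℝ × ℝ => (a q / 2) * a q / q.2 ^ 3) p (0, 1)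
            + fderiv ℝ (fun q : ℝ × ℝ => (b q / 2) * b q / q.2 ^ 3) p (0, 1)
            - fderiv ℝ (fun q : ℝ × ℝ => pdX a q * b q / q.2 ^ 2) p (0, 1) := by
        rw [hGdef, fderiv_fun_sub (dT3.fun_add dT4) dT5, fderiv_fun_add dT3 dT4]
        rfl
      have ea2 : ∀ v : ℝ × ℝ, fderiv ℝ (fun q : ℝ × ℝ => a q / 2) p v
          = fderiv ℝ a p v / 2 := by
        intro v
        have hrw : (fun q : ℝ × ℝ => a q / 2) = fun q => (2:ℝ)⁻¹ * a q := by
          funext q; ring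
        rw [hrw, fderiv_const_mul ((ha.differentiable (by simp)) p) ((2:ℝ)⁻¹)]
        simp only [ContinuousLinearMap.coe_smul', Pi.smul_apply, smul_eq_mul]
        ring
      have eb2 : ∀ v : ℝ × ℝ, fderiv ℝ (fun q : ℝ × ℝ => b q / 2) p v
          = fderiv ℝ b p v / 2 := by
        intro v
        have hrw : (fun q : ℝ × ℝ => b q / 2) = fun q => (2:ℝ)⁻¹ * b q := by
          funext q; ring
        rw [hrw, fderiv_const_mul ((hb.differentiable (by simp)) p) ((2:ℝ)⁻¹)]
        simp only [ContinuousLinearMap.coe_smul', Pi.smul_apply, smul_eq_mul]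
        ring
      have hsch : fderiv ℝ (fun q : ℝ × ℝ => fderiv ℝ a q (1, 0)) p (0, 1)
          = fderiv ℝ (fun q : ℝ × ℝ => fderiv ℝ a q (0, 1)) p (1, 0) :=
        schwarz ha p (0, 1) (1, 0)
      have hdiv' : fderiv ℝ b p (0, 1) = 2 * b p / p.2 - fderiv ℝ a p (1, 0) := by
        have h0 := hdiv p (hε.trans_le hp)
        simp only [pdX, pdY] at h0
        linarith
      have v1 : fderiv ℝ (fun q : ℝ × ℝ => fderiv ℝ a q (0, 1) * b q / q.2 ^ 2) p (1, 0)
          = (fderiv ℝ (fun q : ℝ × ℝ => fderiv ℝ a q (0, 1)) p (1, 0) * b p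
              + fderiv ℝ a p (0, 1) * fderiv ℝ b p (1, 0)) / p.2 ^ 2
            - 2 * (fderiv ℝ a p (0, 1) * b p) * ((1, 0) : ℝ × ℝ).2 / p.2 ^ 3 :=
        term_fderiv2 (pd_smooth ha (0, 1)) hb hy (1, 0)
      have v2 : fderiv ℝ (fun q : ℝ × ℝ => a q * b q / q.2 ^ 3) p (1, 0)
          = (fderiv ℝ a p (1, 0) * b p + a p * fderiv ℝ b p (1, 0)) / p.2 ^ 3
            - 3 * (a p * b p) * ((1, 0) : ℝ × ℝ).2 / p.2 ^ 4 :=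
        term_fderiv3 ha hb hy (1, 0)
      have v3 : fderiv ℝ (fun q : ℝ × ℝ => a q / 2 * a q / q.2 ^ 3) p (0, 1)
          = (fderiv ℝ (fun q : ℝ × ℝ => a q / 2) p (0, 1) * a p
              + a p / 2 * fderiv ℝ a p (0, 1)) / p.2 ^ 3
            - 3 * (a p / 2 * a p) * ((0, 1) : ℝ × ℝ).2 / p.2 ^ 4 :=
        term_fderiv3 (ha.div_const 2) ha hy (0, 1)
      have v4 : fderiv ℝ (fun q : ℝ × ℝ => b q / 2 * b q / q.2 ^ 3) p (0, 1)
          = (fderiv ℝ (fun q : ℝ × ℝ => b q / 2) p (0, 1) * b p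
              + b p / 2 * fderiv ℝ b p (0, 1)) / p.2 ^ 3
            - 3 * (b p / 2 * b p) * ((0, 1) : ℝ × ℝ).2 / p.2 ^ 4 :=
        term_fderiv3 (hb.div_const 2) hb hy (0, 1)
      have v5 : fderiv ℝ (fun q : ℝ × ℝ => fderiv ℝ a q (1, 0) * b q / q.2 ^ 2) p (0, 1)
          = (fderiv ℝ (fun q : ℝ × ℝ => fderiv ℝ a q (1, 0)) p (0, 1) * b p
              + fderiv ℝ a p (1, 0) * fderiv ℝ b p (0, 1)) / p.2 ^ 2
            - 2 * (fderiv ℝ a p (1, 0) * b p) * ((0, 1) : ℝ × ℝ).2 / p.2 ^ 3 :=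
        term_fderiv2 (pd_smooth ha (1, 0)) hb hy (0, 1)
      rw [hI1def, hI2def, hI3def, eF, eG]
      simp only [pdX, pdY]
      rw [v1, v2, v3, v4, v5, ea2 (0, 1), eb2 (0, 1), hsch, hdiv']
      norm_num
      field_simp
      ring
  -- assemble
  have hoff1 : ∀ x : ℝ × ℝ, x ∉ upperHalf → I1 x = 0 := fun x hx =>
    hI1z x (lt_of_le_of_lt (not_lt.1 hx) hε)
  have hoff2 : ∀ x : ℝ × ℝ, x ∉ upperHalf → I2 x = 0 := fun x hx =>
    hI2z x (lt_of_le_of_lt (not_lt.1 hx) hε)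
  have hoff3 : ∀ x : ℝ × ℝ, x ∉ upperHalf → I3 x = 0 := fun x hx =>
    hI3z x (lt_of_le_of_lt (not_lt.1 hx) hε)
  rw [setIntegral_eq_integral_of_forall_compl_eq_zero hoff1,
    setIntegral_eq_integral_of_forall_compl_eq_zero hoff2,
    setIntegral_eq_integral_of_forall_compl_eq_zero hoff3]
  have hzero : ∫ p : ℝ × ℝ, (I2 p - I3 p - I1 p) = 0 := by
    have hfun : (fun p : ℝ × ℝ => I2 p - I3 p - I1 p)
        = fun p : ℝ × ℝ => 2 * (fderiv ℝ F p (1, 0) + fderiv ℝ G p (0, 1)) := funext hpt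
    rw [hfun, integral_const_mul, integral_add hFint hGint, hIF, hIG]
    norm_num
  have hsplit1 : ∫ p : ℝ × ℝ, (I2 p - I3 p - I1 p)
      = (∫ p : ℝ × ℝ, (I2 p - I3 p)) - ∫ p : ℝ × ℝ, I1 p :=
    integral_sub (hint2.sub hint3 : Integrable (fun p : ℝ × ℝ => I2 p - I3 p)) hint1
  have hsplit2 : ∫ p : ℝ × ℝ, (I2 p - I3 p)
      = (∫ p : ℝ × ℝ, I2 p) - ∫ p : ℝ × ℝ, I3 p :=
    integral_sub hint2 hint3
  linarith [hzero, hsplit1, hsplit2]
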